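/- Let 𝐇 be a connected etog with stem prefix x̄ and let ℍ be a linear graph with rel(ℍ) = 𝐇. Then the number of automorphisms of 𝐇 fixing x̄ pointwise equals the number of embeddings of 𝐇 into ℍ mapping x̄ to x̄; that is, #_{x̄→x̄}(𝐇, 𝐇) = #_{x̄→x̄}(𝐇, ℍ). -/

import Mathlib

/-- A tree-ordered graph (tog): a simple graph together with a partial order on its
vertices that is a tree order (sets of predecessors are linearly ordered) and that
guards the edge relation (endpoints of every edge are comparable). -/
structure Tog (V : Type) where
  G : SimpleGraph V
  le : V → V → Prop
  le_refl : ∀ v, le v v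
  le_antisymm : ∀ u v, le u v → le v u → u = v
  le_trans : ∀ u v w, le u v → le v w → le u w
  tree : ∀ x y z, le y x → le z x → le y z ∨ le z y
  guard : ∀ u v, G.Adj u v → le u v ∨ le v u

namespace Tog

variable {V W : Type}

/-- A linear graph is a tog whose order is total. -/
def IsLinear (H : Tog V) : Prop := ∀ u v, H.le u v ∨ H.le v u

/-- An embedding of a tog `H` into a tog `G`: an injective map preserving edges
and the order. -/
def IsEmbedding (H : Tog V) (G : Tog W) (φ : V → W) : Prop :=
  Function.Injective φ ∧ (∀ u v, H.G.Adj u v → G.G.Adj (φ u) (φ v)) ∧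
    ∀ u v, H.le u v → G.le (φ u) (φ v)

/-- An embedding of the induced subtog `H[A]` into `G`, given as a map defined on
all of `V` but constrained only on `A`.  -/
def IsEmbeddingOn (H : Tog V) (G : Tog W) (A : Set V) (φ : V → W) : Prop :=
  Set.InjOn φ A ∧ (∀ u ∈ A, ∀ v ∈ A, H.G.Adj u v → G.G.Adj (φ u) (φ v)) ∧
    ∀ u ∈ A, ∀ v ∈ A, H.le u v → G.le (φ u) (φ v)

/-- The stem of a tog: the set of vertices comparable with every vertex,
i.e. the maximal linearly ordered downward chain lying below all other vertices. -/
def stem (H : Tog V) : Set V := {u | ∀ v, H.le u v ∨ H.le v u}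

/-- `s` is a stem prefix of `H`: a downward-closed subset of the stem. -/
def IsStemPrefix (H : Tog V) (s : Set V) : Prop :=
  s ⊆ H.stem ∧ ∀ u ∈ H.stem, ∀ v ∈ s, H.le u v → u ∈ s

/-- Leaves of a tog: vertices maximal in the tree order. -/
def leaves (H : Tog V) : Set V := {u | ∀ v, H.le u v → v = u}

/-- The vertex set of the piece induced by a set `S` of leaves: the union of the
root paths of the members of `S`. -/
def pieceSet (H : Tog V) (S : Set V) : Set V := {y | ∃ x ∈ S, H.le y x}

/-- `H = H[A₁] ⊕ H[A₂]`: the vertex sets `A₁`, `A₂` are pieces of `H` induced by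
nonempty leaf sets that partition the leaves of `H`. -/
def PieceDecomp (H : Tog V) (A₁ A₂ : Set V) : Prop :=
  ∃ S₁ S₂ : Set V, S₁.Nonempty ∧ S₂.Nonempty ∧ Disjoint S₁ S₂ ∧
    S₁ ∪ S₂ = H.leaves ∧ A₁ = H.pieceSet S₁ ∧ A₂ = H.pieceSet S₂

/-- The induced subtog on a vertex set `A`. -/
def induce (H : Tog V) (A : Set V) : Tog A where
  G := H.G.induce A
  le u v := H.le u v
  le_refl v := H.le_refl v
  le_antisymm u v h1 h2 := Subtype.ext (H.le_antisymm _ _ h1 h2)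
  le_trans u v w := H.le_trans _ _ _
  tree x y z := H.tree _ _ _
  guard u v h := H.guard _ _ h

/-- The ancestor relation of the elimination tree of a (connected) linear graph `H`:
`u` is an ancestor of `v` iff there is a walk from `u` to `v` all of whose vertices
come after `u` in the linear order. -/
def relLe (H : Tog V) (u v : V) : Prop :=
  ∃ p : H.G.Walk u v, ∀ w ∈ p.support, H.le u w

/-- The tree order relaxation `rel(H)` of a linear graph `H`: the tog on the same
graph whose order is the ancestor relation of the elimination tree of `H`. -/
def relax (H : Tog V) (hlin : H.IsLinear) : Tog V where
  G := H.G
  le := H.relLe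
  le_refl v := ⟨SimpleGraph.Walk.nil, by
    intro w hw
    simp only [SimpleGraph.Walk.support_nil, List.mem_singleton] at hw
    subst hw; exact H.le_refl w⟩
  le_antisymm u v h1 h2 := by
    obtain ⟨p, hp⟩ := h1; obtain ⟨q, hq⟩ := h2
    exact H.le_antisymm u v (hp v p.end_mem_support) (hq u q.end_mem_support)
  le_trans u v w h1 h2 := by
    obtain ⟨p, hp⟩ := h1; obtain ⟨q, hq⟩ := h2
    refine ⟨p.append q, ?_⟩
    intro x hx
    rcases (SimpleGraph.Walk.mem_support_append_iff _ _).1 hx with h | h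
    · exact hp x h
    · exact H.le_trans u v x (hp v p.end_mem_support) (hq x h)
  tree x y z h1 h2 := by
    obtain ⟨p, hp⟩ := h1; obtain ⟨q, hq⟩ := h2
    rcases hlin y z with h | h
    · left
      refine ⟨p.append q.reverse, ?_⟩
      intro w hw
      rcases (SimpleGraph.Walk.mem_support_append_iff _ _).1 hw with hw | hw
      · exact hp w hw
      · rw [SimpleGraph.Walk.support_reverse, List.mem_reverse] at hw
        exact H.le_trans y z w h (hq w hw)
    · right
      refine ⟨q.append p.reverse, ?_⟩
      intro w hw
      rcases (SimpleGraph.Walk.mem_support_append_iff _ _).1 hw with hw | hw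
      · exact hq w hw
      · rw [SimpleGraph.Walk.support_reverse, List.mem_reverse] at hw
        exact H.le_trans z y w h (hp w hw)
  guard u v h := by
    rcases H.guard u v h with hle | hle
    · left
      refine ⟨SimpleGraph.Walk.cons h SimpleGraph.Walk.nil, ?_⟩
      intro w hw
      simp only [SimpleGraph.Walk.support_cons, SimpleGraph.Walk.support_nil,
        List.mem_cons, List.mem_singleton] at hw
      rcases hw with rfl | hw
      · exact H.le_refl w
      · rcases hw with rfl | hw
        · exact hle
        · simp at hw
    · right
      refine ⟨SimpleGraph.Walk.cons h.symm SimpleGraph.Walk.nil, ?_⟩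
      intro w hw
      simp only [SimpleGraph.Walk.support_cons, SimpleGraph.Walk.support_nil,
        List.mem_cons, List.mem_singleton] at hw
      rcases hw with rfl | hw
      · exact H.le_refl w
      · rcases hw with rfl | hw
        · exact hle
        · simp at hw

/-- A tog is an etog (elimination-ordered graph) if it is the tree order relaxation
of some linear graph. -/
def IsEtog (D : Tog V) : Prop := ∃ (L : Tog V) (hlin : L.IsLinear), D = L.relax hlin

/-- A pattern relaxation of a pattern graph `H₀`: the relaxation of some linear
ordering of `H₀`. -/
def IsPatternRelaxation (H₀ : SimpleGraph V) (HH : Tog V) : Prop :=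
  ∃ (L : Tog V) (hlin : L.IsLinear), L.G = H₀ ∧ HH = L.relax hlin

/-- Weakly `r`-reachable vertices from `u` in an ordered graph `G`. -/
def wreach (G : Tog W) (r : ℕ) (u : W) : Set W :=
  {v | ∃ p : G.G.Walk u v, p.IsPath ∧ p.length ≤ r ∧ ∀ w ∈ p.support, G.le v w}

/-- Strongly `r`-reachable vertices from `u` in an ordered graph `G`. -/
def sreach (G : Tog W) (r : ℕ) (u : W) : Set W :=
  {v | G.le v u ∧ ∃ p : G.G.Walk u v, p.IsPath ∧ p.length ≤ r ∧
    ∀ w ∈ p.support, w ≠ v → G.le u w}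

/-- The embedding count `#_{x̄→ȳ}(H, G)`: the number of embeddings of `H` into `G`
mapping the (ordered) set `xb` onto `yb`. -/
noncomputable def embCount (H : Tog V) (G : Tog W) (xb : Set V) (yb : Set W) : ℕ :=
  {φ : V → W | H.IsEmbedding G φ ∧ φ '' xb = yb}.ncard

/-- The embedding count of the piece `H[A]` into `G`. -/
noncomputable def pieceEmbCount (H : Tog V) (G : Tog W) (A : Set V)
    (xb : Set V) (yb : Set W) : ℕ :=
  {φ : A → W | (H.induce A).IsEmbedding G φ ∧ φ '' (Subtype.val ⁻¹' xb) = yb}.ncard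

/-- The relaxed embedding count `#_{x̄→ȳ}(H, G | H₁, H₂)`: the number of maps whose
restrictions to the pieces `H[A₁]` and `H[A₂]` are embeddings into `G` and which map
`xb` onto `yb`. -/
noncomputable def relEmbCount (H : Tog V) (G : Tog W) (A₁ A₂ : Set V)
    (xb : Set V) (yb : Set W) : ℕ :=
  {φ : V → W | H.IsEmbeddingOn G A₁ φ ∧ H.IsEmbeddingOn G A₂ φ ∧ φ '' xb = yb}.ncard

/-- A defect of the pieces `H[A₁]`, `H[A₂]` (decomposed along the stem prefix `xb`):
an etog `D` into which `H` does not embed, `H[A₁]` embeds via the identity, `H[A₂]`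
embeds via a map `φ` that is the identity on `(A₂ \ A₁) ∪ xb`, and whose vertex set
is `A₁ ∪ φ(A₂)`. -/
def IsDefect (H : Tog V) (A₁ A₂ xb : Set V) (D : Tog V) : Prop :=
  IsEtog D ∧
  (¬ ∃ ψ : V → V, H.IsEmbedding D ψ) ∧
  H.IsEmbeddingOn D A₁ id ∧
  ∃ φ : V → V, H.IsEmbeddingOn D A₂ φ ∧ (∀ v ∈ (A₂ \ A₁) ∪ xb, φ v = v) ∧
    A₁ ∪ φ '' A₂ = Set.univ

/-- Automorphism of a tog. -/
def IsAuto (H : Tog V) (φ : V → V) : Prop :=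
  Function.Bijective φ ∧ (∀ u v, H.G.Adj u v ↔ H.G.Adj (φ u) (φ v)) ∧
    ∀ u v, H.le u v ↔ H.le (φ u) (φ v)

/-- The induced subtogs `H[xb]` and `G[yb]` are isomorphic. -/
def IndIso (H : Tog V) (G : Tog W) (xb : Set V) (yb : Set W) : Prop :=
  ∃ f : V → W, Set.BijOn f xb yb ∧ ∀ u ∈ xb, ∀ v ∈ xb,
    (H.G.Adj u v ↔ G.G.Adj (f u) (f v)) ∧ (H.le u v ↔ G.le (f u) (f v))

end Tog

/-!
An embedding `φ` of `rel(ℍ)` into `ℍ` maps walks to walks and preserves the linear order, so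
it also preserves the elimination-tree order: it is an injective endomorphism of the finite
tog `rel(ℍ)`, hence an automorphism. An automorphism preserves the number of ancestors of each
vertex, and on the stem, a chain, this number determines the vertex; so `φ` fixes the stem
pointwise, in particular `x̄`. Conversely an automorphism of `rel(ℍ)` is an embedding into
`ℍ`, because the order of `rel(ℍ)` refines to that of `ℍ`.
-/
theorem Finite.rel_of_map_rel_of_injective {α : Type} [Finite α] {R : α → α → Prop} {f : α → α}
    (hf : Function.Injective f) (hR : ∀ u v, R u v → R (f u) (f v)) {u v : α}
    (h : R (f u) (f v)) : R u v := by
  let S : Set (α × α) := {p | R p.1 p.2}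
  have hmaps : Set.MapsTo (Prod.map f f) S S := fun p hp => hR p.1 p.2 hp
  have hbij : Set.BijOn (Prod.map f f) S S :=
    ((Set.toFinite S).injOn_iff_bijOn_of_mapsTo hmaps).1
      (hf.prodMap hf).injOn
  obtain ⟨p, hp, hpuv⟩ := hbij.surjOn (show (f u, f v) ∈ S from h)
  obtain rfl : p = (u, v) := hf.prodMap hf hpuv
  exact hp

namespace Tog

variable {V W : Type}

theorem le_of_relLe {H : Tog V} {u v : V} (h : H.relLe u v) : H.le u v :=
  h.choose_spec v h.choose.end_mem_support

theorem relLe_map {H : Tog V} {G : Tog W} {φ : V → W}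
    (hadj : ∀ u v, H.G.Adj u v → G.G.Adj (φ u) (φ v))
    (hle : ∀ u v, H.relLe u v → G.le (φ u) (φ v)) {u v : V} (h : H.relLe u v) :
    G.relLe (φ u) (φ v) := by
  classical
  obtain ⟨p, hp⟩ := h
  refine ⟨p.map ⟨φ, hadj _ _⟩, fun w hw => ?_⟩
  rw [SimpleGraph.Walk.support_map, List.mem_map] at hw
  obtain ⟨x, hx, rfl⟩ := hw
  exact hle u x ⟨p.takeUntil x hx, fun y hy => hp y (p.support_takeUntil_subset_support hx hy)⟩

theorem isEmbedding_relax_iff {H : Tog V} (hH : H.IsLinear) {G : Tog W}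
    (hG : G.IsLinear) {φ : V → W} :
    (H.relax hH).IsEmbedding (G.relax hG) φ ↔ (H.relax hH).IsEmbedding G φ :=
  ⟨fun ⟨hinj, hadj, hle⟩ => ⟨hinj, hadj, fun _ _ h => le_of_relLe (hle _ _ h)⟩,
    fun ⟨hinj, hadj, hle⟩ => ⟨hinj, hadj, fun _ _ => relLe_map (H := H) hadj hle⟩⟩

theorem isAuto_iff_isEmbedding [Finite V] {H : Tog V} {φ : V → V} :
    H.IsAuto φ ↔ H.IsEmbedding H φ := by
  constructor
  · rintro ⟨hbij, hadj, hle⟩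
    exact ⟨hbij.injective, fun u v => (hadj u v).1, fun u v => (hle u v).1⟩
  · rintro ⟨hinj, hadj, hle⟩
    exact ⟨Finite.injective_iff_bijective.1 hinj,
      fun u v => ⟨hadj u v, Finite.rel_of_map_rel_of_injective hinj hadj⟩,
      fun u v => ⟨hle u v, Finite.rel_of_map_rel_of_injective hinj hle⟩⟩

theorem IsAuto.image_setOf_le {H : Tog V} {φ : V → V} (hφ : H.IsAuto φ) (v : V) :
    φ '' {u | H.le u v} = {u | H.le u (φ v)} := by
  ext w
  obtain ⟨u, rfl⟩ := hφ.1.2 w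
  simp only [Set.mem_image, Set.mem_ofPred_eq, hφ.1.1.eq_iff, exists_eq_right]
  exact hφ.2.2 u v

theorem le_of_le_of_ncard_setOf_le_le [Finite V] {H : Tog V} {u w : V} (huw : H.le u w)
    (h : {a | H.le a w}.ncard ≤ {a | H.le a u}.ncard) : H.le w u := by
  have hsub : {a | H.le a u} ⊆ {a | H.le a w} := fun a ha => H.le_trans a u w ha huw
  have heq := Set.eq_of_subset_of_ncard_le hsub h
  exact (heq ▸ H.le_refl w : w ∈ {a | H.le a u})

theorem eq_of_mem_stem_of_ncard_setOf_le_eq [Finite V] {H : Tog V} {u w : V}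
    (hu : u ∈ H.stem) (h : {a | H.le a u}.ncard = {a | H.le a w}.ncard) : u = w := by
  rcases hu w with huw | hwu
  · exact H.le_antisymm u w huw (le_of_le_of_ncard_setOf_le_le huw h.ge)
  · exact H.le_antisymm u w (le_of_le_of_ncard_setOf_le_le hwu h.le) hwu

theorem IsAuto.apply_eq_self_of_mem_stem [Finite V] {H : Tog V} {φ : V → V}
    (hφ : H.IsAuto φ) {v : V} (hv : v ∈ H.stem) : φ v = v :=
  (eq_of_mem_stem_of_ncard_setOf_le_eq hv <| by
    rw [← hφ.image_setOf_le, Set.ncard_image_of_injective _ hφ.1.1]).symm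

end Tog

theorem auto_linear_general {V : Type} [Fintype V]
    (HH : Tog V)
    (xb : Set V) (hxb : HH.IsStemPrefix xb)
    (L : Tog V) (hlin : L.IsLinear) (hrel : L.relax hlin = HH) :
    {φ : V → V | HH.IsAuto φ ∧ ∀ v ∈ xb, φ v = v}.ncard =
      Tog.embCount HH L xb xb := by
  subst hrel
  refine congrArg Set.ncard (Set.ext fun φ => ?_)
  simp only [Set.mem_ofPred_eq, Tog.isAuto_iff_isEmbedding, ← Tog.isEmbedding_relax_iff hlin hlin]
  refine ⟨fun ⟨hemb, hfix⟩ => ⟨hemb, Set.EqOn.image_eq_self hfix⟩, fun ⟨hemb, _⟩ => ⟨hemb, ?_⟩⟩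
  have hauto := Tog.isAuto_iff_isEmbedding.2 hemb
  exact fun v hv => hauto.apply_eq_self_of_mem_stem (hxb.1 hv)

/-- Lemma auto-linear: for a connected etog `𝐇 = rel(ℍ)` with stem
prefix `x̄`, the number of automorphisms of `𝐇` fixing `x̄` pointwise equals the
number of embeddings of `𝐇` into `ℍ` mapping `x̄` to `x̄`. -/
theorem auto_linear {V : Type} [Fintype V]
    (HH : Tog V) (hconn : HH.G.Connected)
    (xb : Set V) (hxb : HH.IsStemPrefix xb)
    (L : Tog V) (hlin : L.IsLinear) (hrel : L.relax hlin = HH) :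
    {φ : V → V | HH.IsAuto φ ∧ ∀ v ∈ xb, φ v = v}.ncard =
      Tog.embCount HH L xb xb :=
  auto_linear_general HH xb hxb L hlin hrel
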